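/- In the ring R = ℚ[c₁,c₂,d₂]/I as above, setting c₃ := (4c₁d₂ − c₁³)/3 one has the identities c₁·c₃ = c₂² − 3c₂d₂ + 3d₂² and 9·d₂³ = 2·(4c₁d₂ − c₁³)² (equivalently d₂³ = 2c₃²). -/

import Mathlib

/-!
Write `R` for the quotient ring. The first identity is linear in the relations:
`4c₁²d₂ − c₁⁴ = 3(c₂² − 3c₂d₂ + 3d₂²)` follows from the first and third generators of the
ideal. For the second, the relations make the part of `R` of weighted degree six
(`deg c₁ = 1`, `deg c₂ = deg d₂ = 2`) a multiple of `d₂³`: they give `2c₂d₂² = 3d₂³` and,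
after inverting `3`, `2c₂²d₂ = 5d₂³`, while `(4c₁d₂ − c₁³)²` reduces to `18c₂d₂² − 3c₂²d₂ − 15d₂³`,
which is therefore `9d₂³ / 2`.
-/

open MvPolynomial

noncomputable section

abbrev c1 : MvPolynomial (Fin 3) ℚ := X 0
abbrev c2 : MvPolynomial (Fin 3) ℚ := X 1
abbrev d2 : MvPolynomial (Fin 3) ℚ := X 2

def chowIdeal : Ideal (MvPolynomial (Fin 3) ℚ) :=
  Ideal.span {c1 ^ 4 + 3 * c2 ^ 2 - 9 * c2 * d2 - 3 * d2 ^ 2,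
    c1 ^ 2 * c2 - c2 * d2 - 3 * d2 ^ 2,
    c1 ^ 2 * d2 - 3 * d2 ^ 2,
    9 * c1 * c2 ^ 2 - 14 * c1 * c2 * d2,
    3 * c1 * d2 ^ 2 - 2 * c1 * c2 * d2}

/-- `c₃ = (4c₁d₂ − c₁³)/3`, the third Chern class `c₃(U₂*)`. -/
def c3 : MvPolynomial (Fin 3) ℚ := C (1 / 3) * (4 * c1 * d2 - c1 ^ 3)

structure ChowRelations {A : Type*} [CommRing A] (c₁ c₂ d₂ : A) : Prop where
  rel₁ : c₁ ^ 4 + 3 * c₂ ^ 2 - 9 * c₂ * d₂ - 3 * d₂ ^ 2 = 0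
  rel₂ : c₁ ^ 2 * c₂ - c₂ * d₂ - 3 * d₂ ^ 2 = 0
  rel₃ : c₁ ^ 2 * d₂ - 3 * d₂ ^ 2 = 0
  rel₄ : 9 * c₁ * c₂ ^ 2 - 14 * c₁ * c₂ * d₂ = 0
  rel₅ : 3 * c₁ * d₂ ^ 2 - 2 * c₁ * c₂ * d₂ = 0

theorem chowRelations_mk :
    ChowRelations (Ideal.Quotient.mk chowIdeal c1) (Ideal.Quotient.mk chowIdeal c2)
      (Ideal.Quotient.mk chowIdeal d2) := by
  constructor <;>
    simp only [← map_ofNat (Ideal.Quotient.mk chowIdeal), ← map_pow, ← map_mul, ← map_add,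
      ← map_sub, Ideal.Quotient.eq_zero_iff_mem] <;>
    exact Ideal.subset_span (by simp)

namespace ChowRelations

variable {A : Type*} [CommRing A] {c₁ c₂ d₂ : A}

theorem c₁_mul_c₃_numerator (h : ChowRelations c₁ c₂ d₂) :
    c₁ * (4 * c₁ * d₂ - c₁ ^ 3) = 3 * (c₂ ^ 2 - 3 * c₂ * d₂ + 3 * d₂ ^ 2) := by
  linear_combination 4 * h.rel₃ - h.rel₁

theorem c₁_mul_c₃ (h : ChowRelations c₁ c₂ d₂) {t : A} (ht : 3 * t = 1) :
    c₁ * (t * (4 * c₁ * d₂ - c₁ ^ 3)) = c₂ ^ 2 - 3 * c₂ * d₂ + 3 * d₂ ^ 2 := by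
  linear_combination t * h.c₁_mul_c₃_numerator + (c₂ ^ 2 - 3 * c₂ * d₂ + 3 * d₂ ^ 2) * ht

theorem two_mul_c₂_mul_d₂_sq (h : ChowRelations c₁ c₂ d₂) :
    2 * c₂ * d₂ ^ 2 = 3 * d₂ ^ 3 := by
  linear_combination d₂ * h.rel₂ - c₂ * h.rel₃

theorem eighteen_mul_c₂_sq_mul_d₂ (h : ChowRelations c₁ c₂ d₂) :
    18 * c₂ ^ 2 * d₂ = 45 * d₂ ^ 3 := by
  linear_combination 2 * (c₁ * h.rel₄ - 9 * c₂ * h.rel₂ + 14 * c₂ * h.rel₃) +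
    15 * h.two_mul_c₂_mul_d₂_sq

theorem c₃_numerator_sq (h : ChowRelations c₁ c₂ d₂) :
    (4 * c₁ * d₂ - c₁ ^ 3) ^ 2 = 18 * c₂ * d₂ ^ 2 - 3 * c₂ ^ 2 * d₂ - 15 * d₂ ^ 3 := by
  linear_combination c₁ ^ 2 * h.rel₁ - 8 * c₁ ^ 2 * h.rel₃ - 5 * d₂ * h.rel₃ -
    3 * c₂ * h.rel₂ + 9 * c₂ * h.rel₃

theorem three_mul_nine_mul_d₂_cube (h : ChowRelations c₁ c₂ d₂) :
    3 * (9 * d₂ ^ 3) = 3 * (2 * (4 * c₁ * d₂ - c₁ ^ 3) ^ 2) := by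
  linear_combination -6 * h.c₃_numerator_sq + h.eighteen_mul_c₂_sq_mul_d₂ -
    54 * h.two_mul_c₂_mul_d₂_sq

theorem nine_mul_d₂_cube (h : ChowRelations c₁ c₂ d₂) (h3 : IsLeftRegular (3 : A)) :
    9 * d₂ ^ 3 = 2 * (4 * c₁ * d₂ - c₁ ^ 3) ^ 2 :=
  h3 h.three_mul_nine_mul_d₂_cube

end ChowRelations

theorem c3_identities :
    Ideal.Quotient.mk chowIdeal (c1 * c3) =
      Ideal.Quotient.mk chowIdeal (c2 ^ 2 - 3 * c2 * d2 + 3 * d2 ^ 2) ∧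
    Ideal.Quotient.mk chowIdeal (9 * d2 ^ 3) =
      Ideal.Quotient.mk chowIdeal (2 * (4 * c1 * d2 - c1 ^ 3) ^ 2) := by
  have third : 3 * Ideal.Quotient.mk chowIdeal (C (1 / 3)) = 1 := by
    rw [← map_ofNat (Ideal.Quotient.mk chowIdeal) 3, ← map_mul, ← map_ofNat C 3, ← C_mul,
      mul_one_div_cancel three_ne_zero, C_1, map_one]
  simp only [c3, map_mul, map_sub, map_add, map_pow, map_ofNat]
  exact ⟨chowRelations_mk.c₁_mul_c₃ third,
    chowRelations_mk.nine_mul_d₂_cube (IsUnit.of_mul_eq_one _ third).isRegular.left⟩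

end
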